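/- arXiv:2502.02160 — 2 statements merged into one kernel-verified Lean document; each statement's English description precedes it below -/
import Mathlib

section
/- The derivative of marginalization is conditional expectation: let t ↦ q(t) be a curve of positive densities on Ω₁ × Ω₂, each coordinate differentiable at t₀, and let q₁(t)(x) = ∑_z q(t)(x,z) be the first marginal. Then for every x ∈ Ω₁, the function t ↦ log q₁(t)(x) is differentiable at t₀ with derivative ∑_z q̇(x,z) · q(t₀)(x,z)/q₁(t₀)(x), where q̇(x,z) = (d/dt log q(t)(x,z))|_{t=t₀}; that is, the velocity of the marginal equals the conditional expectation E_{q(t₀)}[ q̇ | X = x ] of the velocity of the joint. -/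
open Filter Topology Real

theorem HasDerivAt.of_log {f : ℝ → ℝ} {f' t : ℝ} (hf : ∀ᶠ s in 𝓝 t, 0 < f s)
    (h : HasDerivAt (fun s => Real.log (f s)) f' t) : HasDerivAt f (f' * f t) t := by
  have hexp := h.exp
  rw [exp_log hf.self_of_nhds, mul_comm] at hexp
  exact hexp.congr_of_eventuallyEq (hf.mono fun s hs => (exp_log hs).symm)

theorem HasDerivAt.log_sum {ι : Type*} [Fintype ι] [Nonempty ι] {f : ι → ℝ → ℝ}
    {f' : ι → ℝ} {t : ℝ} (hpos : ∀ i, ∀ᶠ s in 𝓝 t, 0 < f i s)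
    (h : ∀ i, HasDerivAt (fun s => Real.log (f i s)) (f' i) t) :
    HasDerivAt (fun s => Real.log (∑ i, f i s)) (∑ i, f' i * (f i t / ∑ j, f j t)) t := by
  have hsum : HasDerivAt (fun s => ∑ i, f i s) (∑ i, f' i * f i t) t :=
    HasDerivAt.fun_sum fun i _ => (h i).of_log (hpos i)
  have hsum_pos : 0 < ∑ i, f i t :=
    Finset.sum_pos (fun i _ => (hpos i).self_of_nhds) Finset.univ_nonempty
  convert hsum.log hsum_pos.ne' using 1
  simp only [Finset.sum_div, mul_div_assoc]

theorem marginalization_derivative_general {Ω₁ Ω₂ : Type*}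
    [Fintype Ω₂] [Nonempty Ω₂]
    (q : ℝ → Ω₁ → Ω₂ → ℝ) (qdot : Ω₁ → Ω₂ → ℝ) (t₀ : ℝ)
    (hpos : ∀ t x z, 0 < q t x z)
    (hscore : ∀ x z, HasDerivAt (fun t => Real.log (q t x z)) (qdot x z) t₀)
    (x : Ω₁) :
    HasDerivAt (fun t => Real.log (∑ z, q t x z))
      (∑ z, qdot x z * (q t₀ x z / ∑ z', q t₀ x z')) t₀ :=
  HasDerivAt.log_sum (fun z => Eventually.of_forall fun t => hpos t x z) (hscore x)

/-- The derivative of marginalization is the conditional expectation: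
for a curve `t ↦ q t` of positive densities on `Ω₁ × Ω₂` with score `q̇` at `t₀`,
the velocity of the first marginal at `x` is
`∑ z, q̇ x z * q_{2|1}(z|x) = E_{q t₀}[q̇ | X = x]`. -/
theorem marginalization_derivative {Ω₁ Ω₂ : Type*}
    [Fintype Ω₁] [Fintype Ω₂] [Nonempty Ω₁] [Nonempty Ω₂]
    (q : ℝ → Ω₁ → Ω₂ → ℝ) (qdot : Ω₁ → Ω₂ → ℝ) (t₀ : ℝ)
    (hpos : ∀ t x z, 0 < q t x z) (hsum : ∀ t, ∑ x, ∑ z, q t x z = 1)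
    (hscore : ∀ x z, HasDerivAt (fun t => Real.log (q t x z)) (qdot x z) t₀)
    (x : Ω₁) :
    HasDerivAt (fun t => Real.log (∑ z, q t x z))
      (∑ z, qdot x z * (q t₀ x z / ∑ z', q t₀ x z')) t₀ :=
  marginalization_derivative_general q qdot t₀ hpos hscore x
end

section
/- Derivative of the KL divergence from the marginal of an exponential family to a fixed margin: with the exponential family G(θ)(x,y) = exp(θ·T(x,y) − ψ(θ)) p₁(x)p₂(y), ψ(θ) = log(∑_{x,y} exp(θ·T(x,y)) p₁(x)p₂(y)), marginal G₁(θ)(x) = ∑_z G(θ)(x,z), a fixed positive density r₁ on Ω₁, and t ↦ θ(t) differentiable at t₀, the function t ↦ KL(G₁(θ(t)) ‖ r₁) is differentiable at t₀ with derivative −∑_j ( ∑_x G₁(θ(t₀))(x) · ( ∑_z (T_j(x,z) − E_{G(θ(t₀))}[T_j]) · G(θ(t₀))(x,z)/G₁(θ(t₀))(x) ) · log( r₁(x)/G₁(θ(t₀))(x) ) ) · θ'_j(t₀). -/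
/-! Since `∇ψ(θ) = E_{G(θ)}[T]`, the logarithmic derivative of `G(θ t)(x,y)` is
`θ'·(T(x,y) - E[T])`, and summing over `z` gives the derivative `G₁'` of the marginal.
As `G₁` stays a probability density, `∑ₓ G₁' x = 0`, so the term `∑ₓ G₁' x` in
`(d/dt) ∑ₓ G₁ log (G₁ / r₁) = ∑ₓ G₁' log (G₁ / r₁) + ∑ₓ G₁'` drops out. -/

/-- Log-partition function of the exponential family on a product space with
reference density `p₁ ⊗ p₂`. -/
noncomputable def logPartition2 {Ω₁ Ω₂ : Type*} [Fintype Ω₁] [Fintype Ω₂] {d : ℕ}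
    (p₁ : Ω₁ → ℝ) (p₂ : Ω₂ → ℝ) (T : Ω₁ × Ω₂ → Fin d → ℝ) (θ : Fin d → ℝ) : ℝ :=
  Real.log (∑ x, ∑ y, Real.exp (∑ j, θ j * T (x, y) j) * (p₁ x * p₂ y))

/-- The exponential family `G(θ)(x,y) = exp(θ·T(x,y) - ψ(θ)) · p₁(x) p₂(y)`. -/
noncomputable def expFamily2 {Ω₁ Ω₂ : Type*} [Fintype Ω₁] [Fintype Ω₂] {d : ℕ}
    (p₁ : Ω₁ → ℝ) (p₂ : Ω₂ → ℝ) (T : Ω₁ × Ω₂ → Fin d → ℝ) (θ : Fin d → ℝ)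
    (x : Ω₁) (y : Ω₂) : ℝ :=
  Real.exp ((∑ j, θ j * T (x, y) j) - logPartition2 p₁ p₂ T θ) * (p₁ x * p₂ y)

open Finset Real

theorem hasDerivAt_sum_mul_log_div {ι : Type*} [Fintype ι] {g : ℝ → ι → ℝ} {g' r : ι → ℝ}
    {t₀ : ℝ} (hg : ∀ i, HasDerivAt (fun t => g t i) (g' i) t₀) (hg₀ : ∀ i, g t₀ i ≠ 0)
    (hr : ∀ i, r i ≠ 0) (hg' : ∑ i, g' i = 0) :
    HasDerivAt (fun t => ∑ i, g t i * log (g t i / r i))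
      (∑ i, g' i * log (g t₀ i / r i)) t₀ := by
  have hterm : ∀ i, HasDerivAt (fun t => g t i * log (g t i / r i))
      (g' i * log (g t₀ i / r i) + g' i) t₀ := by
    intro i
    refine ((hg i).fun_mul (((hg i).div_const (r i)).log
      (div_ne_zero (hg₀ i) (hr i)))).congr_deriv ?_
    field_simp [hg₀ i, hr i]
  have := HasDerivAt.fun_sum (u := univ) fun i _ => hterm i
  rwa [sum_add_distrib, hg', add_zero] at this

section ExpFamily

variable {Ω₁ Ω₂ : Type*} [Fintype Ω₁] [Fintype Ω₂] {d : ℕ}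
  {p₁ : Ω₁ → ℝ} {p₂ : Ω₂ → ℝ} {T : Ω₁ × Ω₂ → Fin d → ℝ}

noncomputable def expFamily2Mean (p₁ : Ω₁ → ℝ) (p₂ : Ω₂ → ℝ) (T : Ω₁ × Ω₂ → Fin d → ℝ)
    (θ : Fin d → ℝ) (j : Fin d) : ℝ :=
  ∑ x, ∑ y, T (x, y) j * expFamily2 p₁ p₂ T θ x y

theorem expFamily2_pos (hp₁ : ∀ x, 0 < p₁ x) (hp₂ : ∀ y, 0 < p₂ y) (θ : Fin d → ℝ)
    (x : Ω₁) (y : Ω₂) : 0 < expFamily2 p₁ p₂ T θ x y :=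
  mul_pos (exp_pos _) (mul_pos (hp₁ x) (hp₂ y))

theorem expFamily2_eq_div (θ : Fin d → ℝ) (x : Ω₁) (y : Ω₂) :
    expFamily2 p₁ p₂ T θ x y
      = exp (∑ j, θ j * T (x, y) j) * (p₁ x * p₂ y) / exp (logPartition2 p₁ p₂ T θ) := by
  rw [expFamily2, exp_sub]
  ring

variable [Nonempty Ω₁] [Nonempty Ω₂]

theorem exp_logPartition2 (hp₁ : ∀ x, 0 < p₁ x) (hp₂ : ∀ y, 0 < p₂ y) (θ : Fin d → ℝ) :
    exp (logPartition2 p₁ p₂ T θ)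
      = ∑ x, ∑ y, exp (∑ j, θ j * T (x, y) j) * (p₁ x * p₂ y) :=
  exp_log <| sum_pos (fun x _ => sum_pos (fun y _ =>
    mul_pos (exp_pos _) (mul_pos (hp₁ x) (hp₂ y))) univ_nonempty) univ_nonempty

theorem sum_sum_expFamily2_eq_one (hp₁ : ∀ x, 0 < p₁ x) (hp₂ : ∀ y, 0 < p₂ y) (θ : Fin d → ℝ) :
    ∑ x, ∑ y, expFamily2 p₁ p₂ T θ x y = 1 := by
  simp only [expFamily2_eq_div, ← sum_div]
  rw [← exp_logPartition2 hp₁ hp₂, div_self (exp_pos _).ne']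

theorem sum_sum_expFamily2_mul_sub_mean_eq_zero (hp₁ : ∀ x, 0 < p₁ x) (hp₂ : ∀ y, 0 < p₂ y)
    (θ v : Fin d → ℝ) :
    ∑ x, ∑ y, expFamily2 p₁ p₂ T θ x y * ∑ j, v j * (T (x, y) j - expFamily2Mean p₁ p₂ T θ j)
      = 0 := by
  have hj : ∀ j, ∑ x, ∑ y,
      expFamily2 p₁ p₂ T θ x y * (v j * (T (x, y) j - expFamily2Mean p₁ p₂ T θ j)) = 0 := by
    intro j
    have hterm : ∀ x y,
        expFamily2 p₁ p₂ T θ x y * (v j * (T (x, y) j - expFamily2Mean p₁ p₂ T θ j))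
        = v j * (T (x, y) j * expFamily2 p₁ p₂ T θ x y)
          - v j * expFamily2Mean p₁ p₂ T θ j * expFamily2 p₁ p₂ T θ x y := fun _ _ => by ring
    simp only [hterm, sum_sub_distrib, ← mul_sum, sum_sum_expFamily2_eq_one hp₁ hp₂]
    rw [expFamily2Mean]
    ring
  simp only [mul_sum]
  rw [sum_comm_cycle]
  exact sum_eq_zero fun j _ => hj j

theorem hasDerivAt_logPartition2 (hp₁ : ∀ x, 0 < p₁ x) (hp₂ : ∀ y, 0 < p₂ y)
    {θ : ℝ → Fin d → ℝ} {θ' : Fin d → ℝ} {t₀ : ℝ}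
    (hθ : ∀ j, HasDerivAt (fun t => θ t j) (θ' j) t₀) :
    HasDerivAt (fun t => logPartition2 p₁ p₂ T (θ t))
      (∑ j, θ' j * expFamily2Mean p₁ p₂ T (θ t₀) j) t₀ := by
  have hZ := HasDerivAt.fun_sum (u := univ) fun x _ => HasDerivAt.fun_sum (u := univ) fun y _ =>
    (HasDerivAt.fun_sum (u := univ) fun j _ => (hθ j).mul_const (T (x, y) j)).exp.mul_const
      (p₁ x * p₂ y)
  refine (hZ.log ?_).congr_deriv ?_
  · rw [← exp_logPartition2 hp₁ hp₂]
    exact (exp_pos _).ne'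
  · rw [← exp_logPartition2 hp₁ hp₂]
    simp only [mul_sum, sum_mul, sum_div, expFamily2Mean, expFamily2_eq_div]
    rw [sum_comm_cycle]
    exact sum_congr rfl fun j _ => sum_congr rfl fun x _ => sum_congr rfl fun y _ => by ring

theorem hasDerivAt_expFamily2 (hp₁ : ∀ x, 0 < p₁ x) (hp₂ : ∀ y, 0 < p₂ y)
    {θ : ℝ → Fin d → ℝ} {θ' : Fin d → ℝ} {t₀ : ℝ}
    (hθ : ∀ j, HasDerivAt (fun t => θ t j) (θ' j) t₀) (x : Ω₁) (y : Ω₂) :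
    HasDerivAt (fun t => expFamily2 p₁ p₂ T (θ t) x y)
      (expFamily2 p₁ p₂ T (θ t₀) x y
        * ∑ j, θ' j * (T (x, y) j - expFamily2Mean p₁ p₂ T (θ t₀) j)) t₀ := by
  have hs : HasDerivAt (fun t => ∑ j, θ t j * T (x, y) j) (∑ j, θ' j * T (x, y) j) t₀ :=
    HasDerivAt.fun_sum fun j _ => (hθ j).mul_const _
  refine ((hs.fun_sub (hasDerivAt_logPartition2 (T := T) hp₁ hp₂ hθ)).exp.mul_const
    (p₁ x * p₂ y)).congr_deriv ?_
  simp only [expFamily2, mul_sub, sum_sub_distrib]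
  ring

end ExpFamily

theorem KL_expFamily_marginal_to_margin_derivative_general {Ω₁ Ω₂ : Type*}
    [Fintype Ω₁] [Fintype Ω₂] [Nonempty Ω₁] [Nonempty Ω₂] {d : ℕ}
    (p₁ : Ω₁ → ℝ) (hp₁ : ∀ x, 0 < p₁ x)
    (p₂ : Ω₂ → ℝ) (hp₂ : ∀ y, 0 < p₂ y)
    (T : Ω₁ × Ω₂ → Fin d → ℝ)
    (r₁ : Ω₁ → ℝ) (hr₁ : ∀ x, 0 < r₁ x)
    (θ : ℝ → Fin d → ℝ) (θ' : Fin d → ℝ) (t₀ : ℝ)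
    (hθ : ∀ j, HasDerivAt (fun t => θ t j) (θ' j) t₀) :
    HasDerivAt
      (fun t => ∑ x, (∑ z, expFamily2 p₁ p₂ T (θ t) x z)
        * Real.log ((∑ z, expFamily2 p₁ p₂ T (θ t) x z) / r₁ x))
      (-∑ j, (∑ x, (∑ z, expFamily2 p₁ p₂ T (θ t₀) x z)
          * (∑ z, (T (x, z) j - ∑ x', ∑ y', T (x', y') j * expFamily2 p₁ p₂ T (θ t₀) x' y')
              * expFamily2 p₁ p₂ T (θ t₀) x z / (∑ z', expFamily2 p₁ p₂ T (θ t₀) x z'))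
          * Real.log (r₁ x / ∑ z, expFamily2 p₁ p₂ T (θ t₀) x z))
        * θ' j) t₀ := by
  set G := expFamily2 p₁ p₂ T (θ t₀)
  have hG₁ : ∀ x, 0 < ∑ z, G x z := fun x =>
    sum_pos (fun z _ => expFamily2_pos hp₁ hp₂ _ x z) univ_nonempty
  refine (hasDerivAt_sum_mul_log_div (fun x => HasDerivAt.fun_sum fun z _ =>
    hasDerivAt_expFamily2 hp₁ hp₂ hθ x z) (fun x => (hG₁ x).ne') (fun x => (hr₁ x).ne')
    (sum_sum_expFamily2_mul_sub_mean_eq_zero hp₁ hp₂ _ θ')).congr_deriv ?_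
  have hcancel : ∀ x (f : Ω₂ → ℝ), (∑ z, G x z) * (∑ z, f z * G x z / ∑ z', G x z')
      = ∑ z, f z * G x z := fun x f => by
    rw [← sum_div, mul_div_cancel₀ _ (hG₁ x).ne']
  have hlog : ∀ x, log (r₁ x / ∑ z, G x z) = -log ((∑ z, G x z) / r₁ x) := fun x => by
    rw [← log_inv, inv_div]
  simp only [hcancel, hlog, expFamily2Mean, mul_neg, sum_neg_distrib, neg_mul, neg_neg, mul_sum,
    sum_mul]
  rw [sum_comm_cycle]
  exact sum_congr rfl fun j _ => sum_congr rfl fun x _ => sum_congr rfl fun z _ => by ring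

/-- Derivative of the KL divergence from the marginal `G₁(θ t)` of an exponential
family to a fixed margin `r₁`:
`(d/dt) KL(G₁(θ t) ‖ r₁) |_{t₀}
  = -∑ j, (∑ x, G₁(θ t₀)(x) · (∑ z, (T_j(x,z) - E_{G(θ t₀)}[T_j]) · G(θ t₀)(x,z)/G₁(θ t₀)(x))
      · log (r₁ x / G₁(θ t₀)(x))) · θ'_j(t₀)`. -/
theorem KL_expFamily_marginal_to_margin_derivative {Ω₁ Ω₂ : Type*}
    [Fintype Ω₁] [Fintype Ω₂] [Nonempty Ω₁] [Nonempty Ω₂] {d : ℕ}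
    (p₁ : Ω₁ → ℝ) (hp₁ : ∀ x, 0 < p₁ x) (hp₁s : ∑ x, p₁ x = 1)
    (p₂ : Ω₂ → ℝ) (hp₂ : ∀ y, 0 < p₂ y) (hp₂s : ∑ y, p₂ y = 1)
    (T : Ω₁ × Ω₂ → Fin d → ℝ)
    (r₁ : Ω₁ → ℝ) (hr₁ : ∀ x, 0 < r₁ x) (hr₁s : ∑ x, r₁ x = 1)
    (θ : ℝ → Fin d → ℝ) (θ' : Fin d → ℝ) (t₀ : ℝ)
    (hθ : ∀ j, HasDerivAt (fun t => θ t j) (θ' j) t₀) :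
    HasDerivAt
      (fun t => ∑ x, (∑ z, expFamily2 p₁ p₂ T (θ t) x z)
        * Real.log ((∑ z, expFamily2 p₁ p₂ T (θ t) x z) / r₁ x))
      (-∑ j, (∑ x, (∑ z, expFamily2 p₁ p₂ T (θ t₀) x z)
          * (∑ z, (T (x, z) j - ∑ x', ∑ y', T (x', y') j * expFamily2 p₁ p₂ T (θ t₀) x' y')
              * expFamily2 p₁ p₂ T (θ t₀) x z / (∑ z', expFamily2 p₁ p₂ T (θ t₀) x z'))
          * Real.log (r₁ x / ∑ z, expFamily2 p₁ p₂ T (θ t₀) x z))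
        * θ' j) t₀ :=
  KL_expFamily_marginal_to_margin_derivative_general p₁ hp₁ p₂ hp₂ T r₁ hr₁ θ θ' t₀ hθ
end
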